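/- Let T ∈ (1, ∞], a > 0 and b > 0. Suppose y : [0, T) → [0, ∞) is absolutely continuous on compact subintervals and satisfies y'(t) + a·y(t) ≤ h(t) for almost every t ∈ (0, T), where h : (0, T) → [0, ∞) is locally integrable and satisfies ∫_t^{t+1} h(s) ds ≤ b for all t ∈ [0, T − 1). Then y(t) ≤ max{ y(0) + b , b/a + 2b } for all t ∈ (0, T). -/
import Mathlib


open MeasureTheory

theorem stmt_0 (T : ENNReal) (hT : 1 < T) (a b : ℝ) (ha : 0 < a) (hb : 0 < b)
    (y y' h : ℝ → ℝ)
    (hy_nonneg : ∀ t : ℝ, 0 ≤ t → ENNReal.ofReal t < T → 0 ≤ y t)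
    (hh_nonneg : ∀ t : ℝ, 0 < t → ENNReal.ofReal t < T → 0 ≤ h t)
    (hy'_int : ∀ s t : ℝ, 0 ≤ s → s ≤ t → ENNReal.ofReal t < T →
      IntervalIntegrable y' volume s t)
    (hh_int : ∀ s t : ℝ, 0 ≤ s → s ≤ t → ENNReal.ofReal t < T →
      IntervalIntegrable h volume s t)
    (hFTC : ∀ s t : ℝ, 0 ≤ s → s ≤ t → ENNReal.ofReal t < T →
      ∫ r in s..t, y' r = y t - y s)
    (hode : ∀ᵐ t ∂(volume : Measure ℝ), 0 < t → ENNReal.ofReal t < T →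
      y' t + a * y t ≤ h t)
    (hhb : ∀ t : ℝ, 0 ≤ t → ENNReal.ofReal (t + 1) < T →
      ∫ s in t..(t + 1), h s ≤ b) :
    ∀ t : ℝ, 0 < t → ENNReal.ofReal t < T →
      y t ≤ max (y 0 + b) (b / a + 2 * b) := by
  set M : ℝ := max (y 0 + b) (b / a + 2 * b) with hM
  have hTmono : ∀ {u v : ℝ}, u ≤ v → ENNReal.ofReal v < T → ENNReal.ofReal u < T :=
    fun huv hv => lt_of_le_of_lt (ENNReal.ofReal_le_ofReal huv) hv
  have hne0 : ∀ᵐ r : ℝ ∂(volume : Measure ℝ), r ≠ 0 := by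
    refine ae_iff.mpr ?_
    simp
  -- nonnegativity of integrals of h
  have hInt_nonneg : ∀ p q : ℝ, 0 ≤ p → p ≤ q → ENNReal.ofReal q < T →
      0 ≤ ∫ r in p..q, h r := by
    intro p q hp hpq hq
    apply intervalIntegral.integral_nonneg_of_ae_restrict hpq
    filter_upwards [ae_restrict_mem measurableSet_Icc, ae_restrict_of_ae hne0] with r hr hr0
    exact hh_nonneg r (lt_of_le_of_ne (hp.trans hr.1) (Ne.symm hr0)) (hTmono hr.2 hq)
  -- ∫_s^t h ≤ b whenever [s,t] ⊆ [u,u+1]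
  have hIntH : ∀ u s t : ℝ, 0 ≤ u → u ≤ s → s ≤ t → t ≤ u + 1 →
      ENNReal.ofReal (u + 1) < T → ∫ r in s..t, h r ≤ b := by
    intro u s t hu hus hst ht hT1
    have hsT : ENNReal.ofReal s < T := hTmono (hst.trans ht) hT1
    have htT : ENNReal.ofReal t < T := hTmono ht hT1
    have h1 : IntervalIntegrable h volume u s := hh_int u s hu hus hsT
    have h2 : IntervalIntegrable h volume s t := hh_int s t (hu.trans hus) hst htT
    have h3 : IntervalIntegrable h volume t (u + 1) :=
      hh_int t (u + 1) (hu.trans (hus.trans hst)) ht hT1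
    have e1 : (∫ r in u..s, h r) + ∫ r in s..t, h r = ∫ r in u..t, h r :=
      intervalIntegral.integral_add_adjacent_intervals h1 h2
    have e2 : (∫ r in u..t, h r) + ∫ r in t..(u+1), h r = ∫ r in u..(u+1), h r :=
      intervalIntegral.integral_add_adjacent_intervals (h1.trans h2) h3
    have n1 : 0 ≤ ∫ r in u..s, h r := hInt_nonneg u s hu hus hsT
    have n2 : 0 ≤ ∫ r in t..(u+1), h r :=
      hInt_nonneg t (u+1) (hu.trans (hus.trans hst)) ht hT1
    have hbb := hhb u hu hT1
    linarith
  -- Lemma A : y t ≤ y s + ∫_s^t h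
  have lemA : ∀ s t : ℝ, 0 ≤ s → s ≤ t → ENNReal.ofReal t < T →
      y t ≤ y s + ∫ r in s..t, h r := by
    intro s t hs hst ht
    have hftc := hFTC s t hs hst ht
    have hmono : (∫ r in s..t, y' r) ≤ ∫ r in s..t, h r := by
      apply intervalIntegral.integral_mono_ae_restrict hst (hy'_int s t hs hst ht)
        (hh_int s t hs hst ht)
      filter_upwards [ae_restrict_mem measurableSet_Icc, ae_restrict_of_ae hne0,
        ae_restrict_of_ae hode] with r hr hr0 hoder
      have hrpos : 0 < r := lt_of_le_of_ne (hs.trans hr.1) (Ne.symm hr0)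
      have hrT : ENNReal.ofReal r < T := hTmono hr.2 ht
      have h1 := hoder hrpos hrT
      have h2 := hy_nonneg r hrpos.le hrT
      nlinarith
    linarith [hftc ▸ hmono]
  -- Step lemma : for 1 ≤ t, (1+a) * y t ≤ (1+a) * b + y (t-1)
  have step : ∀ t : ℝ, 1 ≤ t → ENNReal.ofReal t < T →
      (1 + a) * y t ≤ (1 + a) * b + y (t - 1) := by
    intro t h1t htT
    have h0t1 : (0:ℝ) ≤ t - 1 := by linarith
    have hstt : t - 1 ≤ t := by linarith
    have hTt1 : ENNReal.ofReal (t - 1 + 1) < T := by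
      rw [sub_add_cancel]; exact htT
    have hy'i : IntervalIntegrable y' volume (t-1) t := hy'_int _ _ h0t1 hstt htT
    -- y is integrable on [t-1, t] since it agrees with a continuous primitive
    have hyeq : Set.EqOn (fun r => y (t-1) + ∫ u in (t-1)..r, y' u) y (Set.Icc (t-1) t) := by
      intro r hr
      have := hFTC (t-1) r h0t1 hr.1 (hTmono hr.2 htT)
      simp only
      linarith
    have hgcont : ContinuousOn (fun r => y (t-1) + ∫ u in (t-1)..r, y' u)
        (Set.Icc (t-1) t) := by
      have := intervalIntegral.continuousOn_primitive_interval' hy'i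
        (Set.left_mem_uIcc (a := t-1) (b := t))
      rw [Set.uIcc_of_le hstt] at this
      exact continuousOn_const.add this
    have hyint : IntervalIntegrable y volume (t-1) t := by
      rw [intervalIntegrable_iff_integrableOn_Icc_of_le hstt]
      exact (hgcont.integrableOn_Icc).congr_fun hyeq measurableSet_Icc
    have hhi : IntervalIntegrable h volume (t-1) t := hh_int _ _ h0t1 hstt htT
    have hsum : IntervalIntegrable (fun r => y' r + a * y r) volume (t-1) t :=
      hy'i.add (hyint.const_mul a)
    have hle : (∫ r in (t-1)..t, (y' r + a * y r)) ≤ ∫ r in (t-1)..t, h r := by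
      apply intervalIntegral.integral_mono_ae_restrict hstt hsum hhi
      filter_upwards [ae_restrict_mem measurableSet_Icc, ae_restrict_of_ae hne0,
        ae_restrict_of_ae hode] with r hr hr0 hoder
      have hrpos : 0 < r := lt_of_le_of_ne (h0t1.trans hr.1) (Ne.symm hr0)
      exact hoder hrpos (hTmono hr.2 htT)
    have hhle : (∫ r in (t-1)..t, h r) ≤ b :=
      hIntH (t-1) (t-1) t h0t1 le_rfl hstt (by linarith) hTt1
    have hsplit : (∫ r in (t-1)..t, (y' r + a * y r))
        = (y t - y (t-1)) + a * ∫ r in (t-1)..t, y r := by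
      rw [intervalIntegral.integral_add hy'i (hyint.const_mul a),
        hFTC _ _ h0t1 hstt htT, intervalIntegral.integral_const_mul]
    have hlow : y t - b ≤ ∫ r in (t-1)..t, y r := by
      have hmono2 : (∫ r in (t-1)..t, (y t - b)) ≤ ∫ r in (t-1)..t, y r := by
        apply intervalIntegral.integral_mono_on hstt intervalIntegrable_const hyint
        intro r hr
        have hA := lemA r t (h0t1.trans hr.1) hr.2 htT
        have hB := hIntH (t-1) r t h0t1 hr.1 hr.2 (by linarith) hTt1
        linarith
      have e : (∫ r in (t-1)..t, (y t - b)) = y t - b := by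
        simp [intervalIntegral.integral_const, sub_sub_cancel]
      linarith [e ▸ hmono2]
    nlinarith [hle, hsplit, hhle]
  -- key bound: b/a + b ≤ M, and M bounds
  have hMb : b / a + b ≤ M := by
    have : b / a + b ≤ b / a + 2 * b := by linarith
    exact this.trans (le_max_right _ _)
  -- induction on unit intervals
  have main : ∀ n : ℕ, ∀ t : ℝ, 0 ≤ t → t ≤ n + 1 → ENNReal.ofReal t < T → y t ≤ M := by
    intro n
    induction n with
    | zero =>
      intro t h0 h1 hTt
      have hA := lemA 0 t le_rfl h0 hTt
      have hB : (∫ r in (0:ℝ)..t, h r) ≤ b := by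
        apply hIntH 0 0 t le_rfl le_rfl h0 (by simpa using h1)
        simpa using hT
      have : y t ≤ y 0 + b := by linarith
      exact this.trans (le_max_left _ _)
    | succ n ih =>
      intro t h0 hn2 hTt
      by_cases hc : t ≤ n + 1
      · exact ih t h0 hc hTt
      · push_neg at hc
        have hn0 : (0:ℝ) ≤ (n:ℝ) := Nat.cast_nonneg n
        have h1t : 1 ≤ t := by linarith
        have hstep := step t h1t hTt
        have hn2' : t ≤ (n:ℝ) + 2 := by push_cast at hn2; linarith
        have hprev : y (t-1) ≤ M := ih (t-1) (by linarith) (by linarith)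
          (hTmono (by linarith) hTt)
        have h1a : (0:ℝ) < 1 + a := by linarith
        have haM : (1 + a) * b ≤ a * M := by
          have e : a * (b / a + b) = b + a * b := by field_simp
          nlinarith [hMb]
        nlinarith
  intro t ht hTt
  obtain ⟨n, hn⟩ := exists_nat_ge t
  exact main n t ht.le (by linarith) hTt
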